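/- arXiv:math/0005147 — 2 statements merged into one kernel-verified Lean document; each statement's English description precedes it below -/
import Mathlib

section
/- Let f ∈ C^β and g ∈ C^γ with β + γ > 1. Then for s < t, the Stieltjes integral satisfies the dyadic expansion ∫ₛᵗ f dg = f(s)(g(t) − g(s)) + Σ_{k=1}^∞ Σ_{i=0}^{2^{k−1}−1} Δf(s + s_{2i}^k) Δg(s + s_{2i+1}^k), where s_i^k = i(t−s)/2^k are the dyadic partition points of [s,t] and Δh(s + s_i^k) = h(s + s_{i+1}^k) − h(s + s_i^k), the double series being absolutely convergent. -/
open Set Finset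

/-- Left-endpoint Riemann–Stieltjes sum. -/
noncomputable def RSsum (f g : ℝ → ℝ) (n : ℕ) (t : Fin (n + 1) → ℝ) : ℝ :=
  ∑ i : Fin n, f (t i.castSucc) * (g (t i.succ) - g (t i.castSucc))

/-- `I` is the Riemann–Stieltjes integral `∫_a^b f dg`. -/
def IsRSIntegral (f g : ℝ → ℝ) (a b I : ℝ) : Prop :=
  ∀ ε > 0, ∃ δ > 0, ∀ (n : ℕ) (t : Fin (n + 1) → ℝ),
    Monotone t → t 0 = a → t (Fin.last n) = b →
    (∀ i : Fin n, t i.succ - t i.castSucc < δ) →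
    |RSsum f g n t - I| < ε

private lemma sum_range_two_mul' (h : ℕ → ℝ) (n : ℕ) :
    ∑ i ∈ Finset.range (2*n), h i = ∑ i ∈ Finset.range n, (h (2*i) + h (2*i+1)) := by
  induction n with
  | zero => simp
  | succ n ih =>
    rw [show 2*(n+1) = (2*n)+1+1 by ring, Finset.sum_range_succ, Finset.sum_range_succ,
      Finset.sum_range_succ, ih]
    ring

/-- Dyadic left Riemann–Stieltjes sum at level `k`. -/
private noncomputable def dyS (f g : ℝ → ℝ) (s t : ℝ) (k : ℕ) : ℝ :=
  ∑ i ∈ Finset.range (2^k),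
    f (s + (i:ℝ)*(t-s)/2^k) * (g (s + ((i:ℝ)+1)*(t-s)/2^k) - g (s + (i:ℝ)*(t-s)/2^k))

private lemma dyS_zero (f g : ℝ → ℝ) (s t : ℝ) : dyS f g s t 0 = f s * (g t - g s) := by
  simp [dyS]

private lemma RSsum_dyadic (f g : ℝ → ℝ) (s t : ℝ) (k : ℕ) :
    RSsum f g (2^k) (fun j : Fin (2^k+1) => s + (j:ℝ)*(t-s)/2^k) = dyS f g s t k := by
  rw [RSsum, dyS]
  simp only [Fin.coe_castSucc, Fin.val_succ]
  push_cast
  exact Fin.sum_univ_eq_sum_range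
    (fun i : ℕ => f (s + (i:ℝ)*(t-s)/2^k) * (g (s + ((i:ℝ)+1)*(t-s)/2^k) - g (s + (i:ℝ)*(t-s)/2^k))) (2^k)

private lemma dyS_succ_sub (f g : ℝ → ℝ) (s t : ℝ) (k : ℕ) :
    dyS f g s t (k+1) - dyS f g s t k =
      ∑ i ∈ Finset.range (2 ^ k),
          (f (s + (2 * (i : ℝ) + 1) * (t - s) / 2 ^ (k + 1)) -
              f (s + (2 * (i : ℝ)) * (t - s) / 2 ^ (k + 1))) *
            (g (s + (2 * (i : ℝ) + 2) * (t - s) / 2 ^ (k + 1)) -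
              g (s + (2 * (i : ℝ) + 1) * (t - s) / 2 ^ (k + 1))) := by
  have h2 : (2:ℕ)^(k+1) = 2 * 2^k := by ring
  rw [dyS, dyS, h2, sum_range_two_mul', ← Finset.sum_sub_distrib]
  refine Finset.sum_congr rfl fun i hi => ?_
  have e1 : s + ((2*i:ℕ):ℝ)*(t-s)/2^(k+1) = s + (i:ℝ)*(t-s)/2^k := by push_cast; ring
  have e2 : s + (((2*i:ℕ):ℝ)+1)*(t-s)/2^(k+1) = s + (2*(i:ℝ)+1)*(t-s)/2^(k+1) := by push_cast; ring
  have e3 : s + (((2*i+1:ℕ):ℝ))*(t-s)/2^(k+1) = s + (2*(i:ℝ)+1)*(t-s)/2^(k+1) := by push_cast; ring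
  have e4 : s + (((2*i+1:ℕ):ℝ)+1)*(t-s)/2^(k+1) = s + ((i:ℝ)+1)*(t-s)/2^k := by push_cast; ring
  have e5 : s + (2*(i:ℝ))*(t-s)/2^(k+1) = s + (i:ℝ)*(t-s)/2^k := by ring
  have e6 : s + (2*(i:ℝ)+2)*(t-s)/2^(k+1) = s + ((i:ℝ)+1)*(t-s)/2^k := by ring
  rw [e1, e2, e3, e4, e5, e6]
  ring

private lemma dyS_tendsto (f g : ℝ → ℝ) (s t I : ℝ) (hst : s < t)
    (hI : IsRSIntegral f g s t I) :
    Filter.Tendsto (dyS f g s t) Filter.atTop (nhds I) := by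
  rw [Metric.tendsto_atTop]
  intro ε hε
  obtain ⟨δ, hδ, hδ'⟩ := hI ε hε
  have h2 : Filter.Tendsto (fun n : ℕ => (t-s) * (1/2:ℝ)^n) Filter.atTop (nhds 0) := by
    simpa using (tendsto_pow_atTop_nhds_zero_of_lt_one (by norm_num : (0:ℝ) ≤ 1/2)
      (by norm_num : (1/2:ℝ) < 1)).const_mul (t-s)
  obtain ⟨N, hN⟩ := (h2.eventually (gt_mem_nhds hδ)).exists_forall_of_atTop
  refine ⟨N, fun n hn => ?_⟩
  rw [Real.dist_eq, ← RSsum_dyadic f g s t n]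
  have hts : (0:ℝ) < t - s := sub_pos.mpr hst
  have hmesh : (t - s) / 2 ^ n < δ := by
    have := hN n hn
    calc (t-s)/2^n = (t-s)*(1/2)^n := by rw [div_pow, one_pow]; ring
    _ < δ := this
  refine hδ' (2^n) _ ?_ ?_ ?_ ?_
  · intro a b hab
    have : (a:ℝ) ≤ b := by exact_mod_cast (Fin.le_def.mp hab)
    have h0 : (0:ℝ) ≤ (t-s)/2^n := by positivity
    simp only
    calc s + (a:ℝ)*(t-s)/2^n = s + (a:ℝ)*((t-s)/2^n) := by ring
    _ ≤ s + (b:ℝ)*((t-s)/2^n) := by gcongr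
    _ = s + (b:ℝ)*(t-s)/2^n := by ring
  · simp
  · have h2n : ((2:ℝ))^n ≠ 0 := by positivity
    simp only [Fin.val_last]
    push_cast
    field_simp
    ring
  · intro i
    simp only [Fin.coe_castSucc, Fin.val_succ]
    push_cast
    calc s + ((i:ℝ)+1)*(t-s)/2^n - (s + (i:ℝ)*(t-s)/2^n) = (t-s)/2^n := by ring
    _ < δ := hmesh

/-- The dyadic expansion of the Young–Stieltjes integral:
`∫ₛᵗ f dg = f(s)(g(t) − g(s)) + Σ_{k=1}^∞ Σ_{i=0}^{2^{k-1}-1} Δf(s+s_{2i}^k) Δg(s+s_{2i+1}^k)`,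
where `s_i^k = i(t−s)/2^k`, the double series being absolutely convergent.
(Here the outer index `k : ℕ` corresponds to level `k+1` of the paper, so that
`2^k = 2^{(k+1)-1}` terms appear at level `k+1`.) -/
theorem stieltjes_integral_dyadic_expansion
    (f g : ℝ → ℝ) (β γ Cf Cg s t I : ℝ)
    (hβ : 0 < β) (hβ1 : β ≤ 1) (hγ : 0 < γ) (hγ1 : γ ≤ 1)
    (hf : ∀ x y : ℝ, |f x - f y| ≤ Cf * |x - y| ^ β)
    (hg : ∀ x y : ℝ, |g x - g y| ≤ Cg * |x - y| ^ γ)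
    (hβγ : 1 < β + γ) (hst : s < t)
    (hI : IsRSIntegral f g s t I) :
    (Summable fun k : ℕ => ∑ i ∈ Finset.range (2 ^ k),
        |(f (s + (2 * (i : ℝ) + 1) * (t - s) / 2 ^ (k + 1)) -
            f (s + (2 * (i : ℝ)) * (t - s) / 2 ^ (k + 1))) *
          (g (s + (2 * (i : ℝ) + 2) * (t - s) / 2 ^ (k + 1)) -
            g (s + (2 * (i : ℝ) + 1) * (t - s) / 2 ^ (k + 1)))|) ∧
    I = f s * (g t - g s) +
        ∑' k : ℕ, ∑ i ∈ Finset.range (2 ^ k),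
          (f (s + (2 * (i : ℝ) + 1) * (t - s) / 2 ^ (k + 1)) -
              f (s + (2 * (i : ℝ)) * (t - s) / 2 ^ (k + 1))) *
            (g (s + (2 * (i : ℝ) + 2) * (t - s) / 2 ^ (k + 1)) -
              g (s + (2 * (i : ℝ) + 1) * (t - s) / 2 ^ (k + 1))) := by
  have hts : (0:ℝ) < t - s := sub_pos.mpr hst
  have hCf : 0 ≤ Cf := by
    have h := (abs_nonneg (f s - f t)).trans (hf s t)
    have hp : (0:ℝ) < |s - t| ^ β := Real.rpow_pos_of_pos (abs_pos.mpr (by linarith)) β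
    nlinarith
  have hCg : 0 ≤ Cg := by
    have h := (abs_nonneg (g s - g t)).trans (hg s t)
    have hp : (0:ℝ) < |s - t| ^ γ := Real.rpow_pos_of_pos (abs_pos.mpr (by linarith)) γ
    nlinarith
  set u := β + γ with hu
  set w : ℝ := (1/2:ℝ) ^ u with hw
  have hwpos : 0 < w := Real.rpow_pos_of_pos (by norm_num) u
  have hr1 : 2 * w < 1 := by
    have : w < (1/2:ℝ)^(1:ℝ) :=
      Real.rpow_lt_rpow_of_exponent_gt (by norm_num) (by norm_num) hβγ
    rw [Real.rpow_one] at this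
    linarith
  have hpowu : ∀ m : ℕ, ((1/2:ℝ)^m)^u = w^m := fun m => by
    rw [← Real.rpow_natCast (1/2 : ℝ) m, ← Real.rpow_mul (by norm_num), mul_comm,
      Real.rpow_mul (by norm_num), Real.rpow_natCast]
  -- pointwise bound on each term
  have hterm : ∀ k i : ℕ,
      |(f (s + (2 * (i : ℝ) + 1) * (t - s) / 2 ^ (k + 1)) -
            f (s + (2 * (i : ℝ)) * (t - s) / 2 ^ (k + 1))) *
          (g (s + (2 * (i : ℝ) + 2) * (t - s) / 2 ^ (k + 1)) -
            g (s + (2 * (i : ℝ) + 1) * (t - s) / 2 ^ (k + 1)))|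
        ≤ Cf * Cg * (t-s)^u * w^(k+1) := by
    intro k i
    set h' : ℝ := (t - s) / 2 ^ (k+1) with hh'
    have hh'pos : 0 < h' := by positivity
    have e1 : (s + (2 * (i : ℝ) + 1) * (t - s) / 2 ^ (k + 1)) -
        (s + (2 * (i : ℝ)) * (t - s) / 2 ^ (k + 1)) = h' := by rw [hh']; ring
    have e2 : (s + (2 * (i : ℝ) + 2) * (t - s) / 2 ^ (k + 1)) -
        (s + (2 * (i : ℝ) + 1) * (t - s) / 2 ^ (k + 1)) = h' := by rw [hh']; ring
    have h1 : |f (s + (2 * (i : ℝ) + 1) * (t - s) / 2 ^ (k + 1)) -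
        f (s + (2 * (i : ℝ)) * (t - s) / 2 ^ (k + 1))| ≤ Cf * h' ^ β := by
      calc _ ≤ Cf * |_ - _| ^ β := hf _ _
      _ = Cf * h' ^ β := by rw [e1, abs_of_pos hh'pos]
    have h2 : |g (s + (2 * (i : ℝ) + 2) * (t - s) / 2 ^ (k + 1)) -
        g (s + (2 * (i : ℝ) + 1) * (t - s) / 2 ^ (k + 1))| ≤ Cg * h' ^ γ := by
      calc _ ≤ Cg * |_ - _| ^ γ := hg _ _
      _ = Cg * h' ^ γ := by rw [e2, abs_of_pos hh'pos]
    calc |_ * _| = |_| * |_| := abs_mul _ _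
    _ ≤ (Cf * h' ^ β) * (Cg * h' ^ γ) :=
        mul_le_mul h1 h2 (abs_nonneg _) (by positivity)
    _ = Cf * Cg * (h' ^ β * h' ^ γ) := by ring
    _ = Cf * Cg * h' ^ u := by rw [← Real.rpow_add hh'pos]
    _ = Cf * Cg * (t-s)^u * w^(k+1) := by
        have : h' = (t-s) * (1/2:ℝ)^(k+1) := by rw [hh']; field_simp; rw [← mul_pow]; norm_num
        rw [this, Real.mul_rpow hts.le (by positivity), hpowu]
        ring
  -- the abs-sums and the signed sums
  set A : ℕ → ℝ := fun k => ∑ i ∈ Finset.range (2 ^ k),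
        |(f (s + (2 * (i : ℝ) + 1) * (t - s) / 2 ^ (k + 1)) -
            f (s + (2 * (i : ℝ)) * (t - s) / 2 ^ (k + 1))) *
          (g (s + (2 * (i : ℝ) + 2) * (t - s) / 2 ^ (k + 1)) -
            g (s + (2 * (i : ℝ) + 1) * (t - s) / 2 ^ (k + 1)))| with hA
  set d : ℕ → ℝ := fun k => ∑ i ∈ Finset.range (2 ^ k),
          (f (s + (2 * (i : ℝ) + 1) * (t - s) / 2 ^ (k + 1)) -
              f (s + (2 * (i : ℝ)) * (t - s) / 2 ^ (k + 1))) *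
            (g (s + (2 * (i : ℝ) + 2) * (t - s) / 2 ^ (k + 1)) -
              g (s + (2 * (i : ℝ) + 1) * (t - s) / 2 ^ (k + 1))) with hd
  have hAbound : ∀ k, A k ≤ (Cf * Cg * (t-s)^u * w) * (2*w)^k := by
    intro k
    calc A k ≤ ∑ _i ∈ Finset.range (2^k), Cf * Cg * (t-s)^u * w^(k+1) :=
        Finset.sum_le_sum fun i _ => hterm k i
    _ = (2^k : ℕ) * (Cf * Cg * (t-s)^u * w^(k+1)) := by
        rw [Finset.sum_const, Finset.card_range, nsmul_eq_mul]
    _ = (Cf * Cg * (t-s)^u * w) * (2*w)^k := by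
        push_cast
        rw [mul_pow, pow_succ]
        ring
  have hgeo : Summable fun k : ℕ => (Cf * Cg * (t-s)^u * w) * (2*w)^k :=
    (summable_geometric_of_lt_one (by positivity) hr1).mul_left _
  have hAsummable : Summable A :=
    Summable.of_nonneg_of_le (fun k => Finset.sum_nonneg fun i _ => abs_nonneg _)
      hAbound hgeo
  have hdabs : Summable fun k => |d k| :=
    Summable.of_nonneg_of_le (fun k => abs_nonneg _)
      (fun k => Finset.abs_sum_le_sum_abs _ _) hAsummable
  have hdsummable : Summable d := hdabs.of_abs
  have hpartial : ∀ n, ∑ k ∈ Finset.range n, d k = dyS f g s t n - dyS f g s t 0 := by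
    intro n
    rw [← Finset.sum_range_sub (dyS f g s t) n]
    exact Finset.sum_congr rfl fun k _ => (dyS_succ_sub f g s t k).symm
  have htend : Filter.Tendsto (fun n => ∑ k ∈ Finset.range n, d k) Filter.atTop
      (nhds (I - dyS f g s t 0)) := by
    have := (dyS_tendsto f g s t I hst hI).sub_const (dyS f g s t 0)
    exact this.congr fun n => (hpartial n).symm
  have hHas : HasSum d (I - dyS f g s t 0) :=
    (hdsummable.hasSum_iff_tendsto_nat).mpr htend
  refine ⟨hAsummable, ?_⟩
  have := hHas.tsum_eq
  rw [dyS_zero] at this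
  linarith [this]
end

section
/- Let b, σ : [0,∞) × ℝ → ℝ be Lipschitz in t and x, 1/2 < γ ≤ 1, and fix T, K, L > 0, s ∈ [0,T], a ∈ ℝ, and g with |Δg| ≤ L|Δt|^γ on [0,T]. Define F_t X = a + ∫ₛᵗ b(τ, X(τ)) dτ + ∫ₛᵗ σ(τ, X(τ)) dg(τ). Then for every β with 1 − γ < β < γ there exists ε₁ > 0 such that F maps C_K^β([s, s+ε₁], a) = {X : X(s) = a and |X(t₂)−X(t₁)| ≤ K|t₂−t₁|^β} into itself. -/
open Set Finset intervalIntegral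

noncomputable def unif (u v : ℝ) (m : ℕ) (i : ℕ) : ℝ := u + i * ((v - u) / m)

noncomputable def RSsumN (f g : ℝ → ℝ) (n : ℕ) (t : ℕ → ℝ) : ℝ :=
  ∑ i ∈ Finset.range n, f (t i) * (g (t (i+1)) - g (t i))

lemma RSsum_eq_RSsumN (f g : ℝ → ℝ) (n : ℕ) (t : ℕ → ℝ) :
    RSsum f g n (fun i => t i.val) = RSsumN f g n t := by
  unfold RSsum RSsumN
  rw [← Fin.sum_univ_eq_sum_range]
  exact Finset.sum_congr rfl fun i _ => by simp [Fin.val_succ, Fin.coe_castSucc]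

lemma unif_zero (u v : ℝ) (m : ℕ) : unif u v m 0 = u := by simp [unif]

lemma unif_last (u v : ℝ) (m : ℕ) (hm : m ≠ 0) : unif u v m m = v := by
  have : (m:ℝ) ≠ 0 := Nat.cast_ne_zero.mpr hm
  simp only [unif]; rw [mul_div_assoc', mul_div_cancel_left₀ _ this]; ring

lemma unif_spacing (u v : ℝ) (m : ℕ) (i : ℕ) :
    unif u v m (i+1) - unif u v m i = (v - u) / m := by
  simp [unif]; push_cast; ring

lemma unif_mono (u v : ℝ) (huv : u ≤ v) (m : ℕ) {i j : ℕ} (hij : i ≤ j) :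
    unif u v m i ≤ unif u v m j := by
  unfold unif
  have h0 : (0:ℝ) ≤ (v - u) / m := div_nonneg (by linarith) (Nat.cast_nonneg m)
  have : (i:ℝ) ≤ j := Nat.cast_le.mpr hij
  nlinarith

lemma unif_double (u v : ℝ) (m i : ℕ) : unif u v (2*m) (2*i) = unif u v m i := by
  rcases Nat.eq_zero_or_pos m with h | h
  · simp [h, unif]
  · have : (m:ℝ) ≠ 0 := Nat.cast_ne_zero.mpr h.ne'
    unfold unif
    push_cast
    field_simp

lemma unif_mem (u v : ℝ) (huv : u ≤ v) (m : ℕ) (hm : m ≠ 0) {i : ℕ} (hi : i ≤ m) :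
    unif u v m i ∈ Icc u v := by
  constructor
  · simpa [unif_zero] using unif_mono u v huv m (Nat.zero_le i)
  · simpa [unif_last u v m hm] using unif_mono u v huv m hi

lemma pair_sum (a : ℕ → ℝ) (m : ℕ) :
    ∑ i ∈ Finset.range (2*m), a i = ∑ i ∈ Finset.range m, (a (2*i) + a (2*i+1)) := by
  induction m with
  | zero => simp
  | succ m ih =>
    have h2 : 2*(m+1) = (2*m+1)+1 := by ring
    rw [h2, Finset.sum_range_succ, Finset.sum_range_succ, ih, Finset.sum_range_succ]
    ring

def HolderOn (f : ℝ → ℝ) (C β : ℝ) (s : Set ℝ) : Prop :=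
  ∀ x ∈ s, ∀ y ∈ s, |f y - f x| ≤ C * |y - x| ^ β

lemma step_est (f g : ℝ → ℝ) (u v Cf Lg β γ : ℝ) (huv : u ≤ v) (hCf : 0 ≤ Cf) (hLg : 0 ≤ Lg)
    (hβγ : 0 < β + γ)
    (hf : HolderOn f Cf β (Icc u v)) (hg : HolderOn g Lg γ (Icc u v)) (m : ℕ) (hm : m ≠ 0) :
    |RSsumN f g (2*m) (unif u v (2*m)) - RSsumN f g m (unif u v m)|
      ≤ m * (Cf * Lg * ((v-u)/(2*(m:ℝ)))^(β+γ)) := by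
  set x := unif u v (2*m) with hx
  set h := (v-u)/(2*(m:ℝ)) with hh
  have hm2 : (2*m : ℕ) ≠ 0 := by omega
  have hhe : ((v-u)/((2*m : ℕ) : ℝ)) = h := by push_cast; rfl
  have h0 : 0 ≤ h := by
    rw [hh]; apply div_nonneg (by linarith); positivity
  have key : RSsumN f g (2*m) x - RSsumN f g m (unif u v m)
      = ∑ i ∈ Finset.range m, (f (x (2*i+1)) - f (x (2*i))) * (g (x (2*i+2)) - g (x (2*i+1))) := by
    unfold RSsumN
    rw [pair_sum (fun i => f (x i) * (g (x (i+1)) - g (x i))) m, ← Finset.sum_sub_distrib]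
    apply Finset.sum_congr rfl
    intro i _
    have e1 : unif u v m i = x (2*i) := (unif_double u v m i).symm
    have e2 : unif u v m (i+1) = x (2*i+2) := by
      rw [show 2*i+2 = 2*(i+1) from by ring, hx]
      exact (unif_double u v m (i+1)).symm
    rw [e1, e2]
    ring
  rw [key]
  calc |∑ i ∈ Finset.range m, (f (x (2*i+1)) - f (x (2*i))) * (g (x (2*i+2)) - g (x (2*i+1)))|
      ≤ ∑ i ∈ Finset.range m, |(f (x (2*i+1)) - f (x (2*i))) * (g (x (2*i+2)) - g (x (2*i+1)))| :=
        Finset.abs_sum_le_sum_abs _ _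
    _ ≤ ∑ i ∈ Finset.range m, Cf * Lg * h^(β+γ) := by
        apply Finset.sum_le_sum
        intro i hi
        have hi' : i < m := Finset.mem_range.mp hi
        have mem : ∀ k ≤ 2*m, x k ∈ Icc u v := fun k hk => unif_mem u v huv (2*m) hm2 hk
        have m1 : x (2*i) ∈ Icc u v := mem _ (by omega)
        have m2 : x (2*i+1) ∈ Icc u v := mem _ (by omega)
        have m3 : x (2*i+2) ∈ Icc u v := mem _ (by omega)
        have s1 : x (2*i+1) - x (2*i) = h := by
          rw [hx, unif_spacing u v (2*m) (2*i), hhe]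
        have s2 : x (2*i+2) - x (2*i+1) = h := by
          have : 2*i+2 = (2*i+1)+1 := by ring
          rw [hx, this, unif_spacing u v (2*m) (2*i+1), hhe]
        have b1 : |f (x (2*i+1)) - f (x (2*i))| ≤ Cf * h^β := by
          have := hf _ m1 _ m2
          rwa [s1, abs_of_nonneg h0] at this
        have b2 : |g (x (2*i+2)) - g (x (2*i+1))| ≤ Lg * h^γ := by
          have := hg _ m2 _ m3
          rwa [s2, abs_of_nonneg h0] at this
        rw [abs_mul]
        calc |f (x (2*i+1)) - f (x (2*i))| * |g (x (2*i+2)) - g (x (2*i+1))|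
            ≤ (Cf * h^β) * (Lg * h^γ) := by
              apply mul_le_mul b1 b2 (abs_nonneg _) (by positivity)
          _ = Cf * Lg * (h^β * h^γ) := by ring
          _ = Cf * Lg * h^(β+γ) := by
              rw [← Real.rpow_add' h0 hβγ.ne']
    _ = m * (Cf * Lg * h^(β+γ)) := by
        rw [Finset.sum_const, Finset.card_range, nsmul_eq_mul]
lemma pow_step_bound (p : ℝ) (hp : 1 < p) (N : ℕ) (w : ℝ) (hw : 0 ≤ w) :
    ((2:ℝ)^N) * ((w)/(2*(2:ℝ)^N))^p ≤ w^p * ((2:ℝ)^(1-p))^N := by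
  have two_pos : (0:ℝ) < 2 := by norm_num
  have e1 : ((2:ℝ)*2^N) = (2:ℝ)^(((N+1:ℕ)):ℝ) := by
    rw [Real.rpow_natCast, pow_succ]; ring
  have e2 : (w/(2*(2:ℝ)^N))^p = w^p * (2:ℝ)^(-(((N+1):ℕ):ℝ)*p) := by
    rw [div_eq_mul_inv, Real.mul_rpow hw (by positivity), e1,
      ← Real.rpow_neg two_pos.le, ← Real.rpow_mul two_pos.le]
  have e3 : ((2:ℝ)^(1-p))^N = (2:ℝ)^((1-p)*(N:ℝ)) := by
    rw [← Real.rpow_natCast ((2:ℝ)^(1-p)) N, ← Real.rpow_mul two_pos.le]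
  rw [e2, e3, ← Real.rpow_natCast (2:ℝ) N,
    mul_left_comm, ← Real.rpow_add two_pos]
  apply mul_le_mul_of_nonneg_left _ (Real.rpow_nonneg hw p)
  apply Real.rpow_le_rpow_of_exponent_le (by norm_num)
  push_cast; nlinarith

lemma dyadic_est (f g : ℝ → ℝ) (u v Cf Lg β γ : ℝ) (huv : u ≤ v) (hCf : 0 ≤ Cf) (hLg : 0 ≤ Lg)
    (hβ : 0 < β) (hγ : 0 < γ) (hp : 1 < β + γ)
    (hf : HolderOn f Cf β (Icc u v)) (hg : HolderOn g Lg γ (Icc u v)) (N : ℕ) :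
    |RSsumN f g (2^N) (unif u v (2^N)) - f u * (g v - g u)|
      ≤ Cf * Lg * (v-u)^(β+γ) * (1 - (2:ℝ)^(1-(β+γ)))⁻¹ := by
  set p := β + γ with hpdef
  set r := (2:ℝ)^(1-p) with hrdef
  have hr0 : 0 ≤ r := Real.rpow_nonneg (by norm_num) _
  have hr1 : r < 1 := Real.rpow_lt_one_of_one_lt_of_neg (by norm_num) (by linarith)
  have hCL : 0 ≤ Cf * Lg * (v-u)^p := by
    apply mul_nonneg (mul_nonneg hCf hLg) (Real.rpow_nonneg (by linarith) _)
  have main : ∀ N : ℕ, |RSsumN f g (2^N) (unif u v (2^N)) - f u * (g v - g u)|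
      ≤ Cf * Lg * (v-u)^p * ∑ j ∈ Finset.range N, r^j := by
    intro N
    induction N with
    | zero =>
      simp [RSsumN, unif_zero, unif_last u v 1 one_ne_zero]
    | succ N ih =>
      have hstep := step_est f g u v Cf Lg β γ huv hCf hLg (by linarith) hf hg (2^N)
        (by positivity)
      have hcast : (((2^N : ℕ)) : ℝ) = (2:ℝ)^N := by push_cast; ring
      rw [hcast] at hstep
      have hpsb := pow_step_bound p hp N (v-u) (by linarith)
      have h1 : |RSsumN f g (2^(N+1)) (unif u v (2^(N+1))) - RSsumN f g (2^N) (unif u v (2^N))|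
          ≤ Cf * Lg * ((v-u)^p * r^N) := by
        rw [show (2:ℕ)^(N+1) = 2*2^N from by rw [pow_succ]; ring]
        calc |RSsumN f g (2*2^N) (unif u v (2*2^N)) - RSsumN f g (2^N) (unif u v (2^N))|
            ≤ (2:ℝ)^N * (Cf * Lg * ((v-u)/(2*(2:ℝ)^N))^p) := hstep
          _ = Cf * Lg * ((2:ℝ)^N * ((v-u)/(2*(2:ℝ)^N))^p) := by ring
          _ ≤ Cf * Lg * ((v-u)^p * r^N) :=
              mul_le_mul_of_nonneg_left hpsb (mul_nonneg hCf hLg)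
      calc |RSsumN f g (2^(N+1)) (unif u v (2^(N+1))) - f u * (g v - g u)|
          ≤ |RSsumN f g (2^(N+1)) (unif u v (2^(N+1))) - RSsumN f g (2^N) (unif u v (2^N))|
            + |RSsumN f g (2^N) (unif u v (2^N)) - f u * (g v - g u)| := by
              have := abs_sub_abs_le_abs_sub (RSsumN f g (2^(N+1)) (unif u v (2^(N+1)))) (f u * (g v - g u))
              exact abs_sub_le _ _ _
        _ ≤ Cf * Lg * ((v-u)^p * r^N) + Cf * Lg * (v-u)^p * ∑ j ∈ Finset.range N, r^j :=
            add_le_add h1 ih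
        _ = Cf * Lg * (v-u)^p * ∑ j ∈ Finset.range (N+1), r^j := by
            rw [Finset.sum_range_succ]; ring
  calc |RSsumN f g (2^N) (unif u v (2^N)) - f u * (g v - g u)|
      ≤ Cf * Lg * (v-u)^p * ∑ j ∈ Finset.range N, r^j := main N
    _ ≤ Cf * Lg * (v-u)^p * (1-r)⁻¹ := by
        apply mul_le_mul_of_nonneg_left _ hCL
        rw [← tsum_geometric_of_lt_one hr0 hr1]
        exact Summable.sum_le_tsum _ (fun i _ => by positivity) (summable_geometric_of_lt_one hr0 hr1)

lemma exists_fine (u v δ : ℝ) (hδ : 0 < δ) : ∃ N : ℕ, (v-u)/2^N < δ := by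
  obtain ⟨N, hN⟩ := pow_unbounded_of_one_lt ((v-u)/δ) (one_lt_two (α := ℝ))
  refine ⟨N, ?_⟩
  rw [div_lt_iff₀ (by positivity)]
  rw [div_lt_iff₀ hδ] at hN
  linarith [hN]

lemma apply_RS (f g : ℝ → ℝ) (sa bb I δ ε : ℝ) (n : ℕ) (t : ℕ → ℝ)
    (H : ∀ (n : ℕ) (tF : Fin (n+1) → ℝ), Monotone tF → tF 0 = sa → tF (Fin.last n) = bb →
      (∀ i : Fin n, tF i.succ - tF i.castSucc < δ) → |RSsum f g n tF - I| < ε)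
    (hmono : ∀ i j : ℕ, i ≤ j → t i ≤ t j) (h0 : t 0 = sa) (hn : t n = bb)
    (hmesh : ∀ i < n, t (i+1) - t i < δ) : |RSsumN f g n t - I| < ε := by
  rw [← RSsum_eq_RSsumN]
  apply H n (fun i => t i.val) (fun i j hij => hmono _ _ hij) h0
  · simp [Fin.val_last, hn]
  · intro i
    simpa [Fin.val_succ, Fin.coe_castSucc] using hmesh i.val i.isLt

noncomputable def ptn (s t₁ t₂ : ℝ) (na nb : ℕ) (i : ℕ) : ℝ :=
  if i ≤ na then unif s t₁ na i else unif t₁ t₂ nb (i - na)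

section ptn
variable (s t₁ t₂ : ℝ) (na nb : ℕ)

lemma ptn_left {i : ℕ} (hi : i ≤ na) : ptn s t₁ t₂ na nb i = unif s t₁ na i := if_pos hi

lemma ptn_right (hna : na ≠ 0) {i : ℕ} (hi : na ≤ i) :
    ptn s t₁ t₂ na nb i = unif t₁ t₂ nb (i - na) := by
  rcases eq_or_lt_of_le hi with h | h
  · rw [ptn_left s t₁ t₂ na nb (le_of_eq h.symm), ← h, Nat.sub_self, unif_zero,
      unif_last s t₁ na hna]
  · exact if_neg (by omega)

lemma ptn_mono (hst : s ≤ t₁) (ht : t₁ ≤ t₂) (hna : na ≠ 0) {i j : ℕ} (hij : i ≤ j) :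
    ptn s t₁ t₂ na nb i ≤ ptn s t₁ t₂ na nb j := by
  rcases le_or_gt j na with hj | hj
  · rw [ptn_left s t₁ t₂ na nb (hij.trans hj), ptn_left s t₁ t₂ na nb hj]
    exact unif_mono s t₁ hst na hij
  · rw [ptn_right s t₁ t₂ na nb hna hj.le]
    rcases le_or_gt i na with hi | hi
    · rw [ptn_left s t₁ t₂ na nb hi]
      calc unif s t₁ na i ≤ t₁ := by
            simpa [unif_last s t₁ na hna] using unif_mono s t₁ hst na hi
        _ = unif t₁ t₂ nb 0 := (unif_zero t₁ t₂ nb).symm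
        _ ≤ unif t₁ t₂ nb (j - na) := unif_mono t₁ t₂ ht nb (Nat.zero_le _)
    · rw [ptn_right s t₁ t₂ na nb hna hi.le]
      exact unif_mono t₁ t₂ ht nb (by omega)

lemma ptn_split (f g : ℝ → ℝ) (hna : na ≠ 0) (hnb : nb ≠ 0) :
    RSsumN f g (na+nb) (ptn s t₁ t₂ na nb)
      = RSsumN f g na (unif s t₁ na) + RSsumN f g nb (unif t₁ t₂ nb) := by
  unfold RSsumN
  rw [Finset.sum_range_add]
  congr 1
  · apply Finset.sum_congr rfl
    intro i hi
    have hi' : i < na := Finset.mem_range.mp hi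
    rw [ptn_left s t₁ t₂ na nb hi'.le, ptn_left s t₁ t₂ na nb hi']
  · apply Finset.sum_congr rfl
    intro i _
    rw [ptn_right s t₁ t₂ na nb hna (Nat.le_add_right na i),
        ptn_right s t₁ t₂ na nb hna (by omega),
        Nat.add_sub_cancel_left, show na + i + 1 - na = i + 1 from by omega]

end ptn

lemma RS_increment (f g : ℝ → ℝ) (Cf Lg β γ s t₁ t₂ I₁ I₂ : ℝ)
    (h1 : IsRSIntegral f g s t₁ I₁) (h2 : IsRSIntegral f g s t₂ I₂)
    (hst : s ≤ t₁) (ht : t₁ ≤ t₂) (hCf : 0 ≤ Cf) (hLg : 0 ≤ Lg)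
    (hβ : 0 < β) (hγ : 0 < γ) (hp : 1 < β + γ)
    (hf : HolderOn f Cf β (Icc s t₂)) (hg : HolderOn g Lg γ (Icc s t₂)) :
    |I₂ - I₁ - f t₁ * (g t₂ - g t₁)|
      ≤ Cf * Lg * (t₂-t₁)^(β+γ) * (1 - (2:ℝ)^(1-(β+γ)))⁻¹ := by
  apply le_of_forall_pos_le_add
  intro ε hε
  obtain ⟨δ₁, hδ₁, H1⟩ := h1 (ε/2) (by linarith)
  obtain ⟨δ₂, hδ₂, H2⟩ := h2 (ε/2) (by linarith)
  have hδ : 0 < min δ₁ δ₂ := lt_min hδ₁ hδ₂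
  set δ := min δ₁ δ₂ with hδdef
  obtain ⟨N₁, hN₁⟩ := exists_fine s t₁ δ hδ
  obtain ⟨N₂, hN₂⟩ := exists_fine t₁ t₂ δ hδ
  set na := 2^N₁ with hnadef
  set nb := 2^N₂ with hnbdef
  have hna : na ≠ 0 := by positivity
  have hnb : nb ≠ 0 := by positivity
  have hcastA : ((na:ℕ):ℝ) = 2^N₁ := by rw [hnadef]; exact_mod_cast rfl
  have hcastB : ((nb:ℕ):ℝ) = 2^N₂ := by rw [hnbdef]; exact_mod_cast rfl
  have meshA : (t₁ - s)/(na:ℝ) < δ := by rw [hcastA]; exact hN₁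
  have meshB : (t₂ - t₁)/(nb:ℝ) < δ := by rw [hcastB]; exact hN₂
  have hA : |RSsumN f g na (unif s t₁ na) - I₁| < ε/2 := by
    apply apply_RS f g s t₁ I₁ δ₁ (ε/2) na _ H1
    · exact fun i j hij => unif_mono s t₁ hst na hij
    · exact unif_zero s t₁ na
    · exact unif_last s t₁ na hna
    · intro i _
      rw [unif_spacing]
      exact lt_of_lt_of_le meshA (min_le_left _ _)
  have hB : |RSsumN f g (na+nb) (ptn s t₁ t₂ na nb) - I₂| < ε/2 := by
    apply apply_RS f g s t₂ I₂ δ₂ (ε/2) (na+nb) _ H2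
    · exact fun i j hij => ptn_mono s t₁ t₂ na nb hst ht hna hij
    · rw [ptn_left s t₁ t₂ na nb (Nat.zero_le na)]; exact unif_zero s t₁ na
    · rw [ptn_right s t₁ t₂ na nb hna (Nat.le_add_right na nb), Nat.add_sub_cancel_left]
      exact unif_last t₁ t₂ nb hnb
    · intro i _
      rcases lt_or_ge i na with hi | hi
      · rw [ptn_left s t₁ t₂ na nb hi, ptn_left s t₁ t₂ na nb hi.le, unif_spacing]
        exact lt_of_lt_of_le meshA (min_le_right _ _)
      · rw [ptn_right s t₁ t₂ na nb hna hi, ptn_right s t₁ t₂ na nb hna (by omega),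
          show i + 1 - na = (i - na) + 1 from by omega, unif_spacing]
        exact lt_of_lt_of_le meshB (min_le_right _ _)
  have hsub : Icc t₁ t₂ ⊆ Icc s t₂ := Icc_subset_Icc hst le_rfl
  have hD := dyadic_est f g t₁ t₂ Cf Lg β γ ht hCf hLg hβ hγ hp
    (fun x hx y hy => hf x (hsub hx) y (hsub hy))
    (fun x hx y hy => hg x (hsub hx) y (hsub hy)) N₂
  rw [ptn_split s t₁ t₂ na nb f g hna hnb] at hB
  set SA := RSsumN f g na (unif s t₁ na)
  set SB := RSsumN f g nb (unif t₁ t₂ nb)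
  have key : I₂ - I₁ - f t₁ * (g t₂ - g t₁)
      = -(SA + SB - I₂) + (SA - I₁) + (SB - f t₁ * (g t₂ - g t₁)) := by ring
  rw [key]
  calc |(-(SA + SB - I₂)) + (SA - I₁) + (SB - f t₁ * (g t₂ - g t₁))|
      ≤ |(-(SA + SB - I₂)) + (SA - I₁)| + |SB - f t₁ * (g t₂ - g t₁)| := abs_add_le _ _
    _ ≤ |(-(SA + SB - I₂))| + |SA - I₁| + |SB - f t₁ * (g t₂ - g t₁)| := by
        have := abs_add_le (-(SA + SB - I₂)) (SA - I₁); linarith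
    _ ≤ ε/2 + ε/2 + Cf * Lg * (t₂-t₁)^(β+γ) * (1 - (2:ℝ)^(1-(β+γ)))⁻¹ := by
        rw [abs_neg]
        exact add_le_add (add_le_add hB.le hA.le) hD
    _ = Cf * Lg * (t₂-t₁)^(β+γ) * (1 - (2:ℝ)^(1-(β+γ)))⁻¹ + ε := by ring

lemma RS_self (f g : ℝ → ℝ) (s I : ℝ) (h : IsRSIntegral f g s s I) : I = 0 := by
  by_contra hI
  obtain ⟨δ, hδ, H⟩ := h |I| (abs_pos.mpr hI)
  have h0 := H 0 (fun _ => s) monotone_const rfl rfl (fun i => i.elim0)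
  simp only [RSsum, Finset.univ_eq_empty, Finset.sum_empty, zero_sub, abs_neg] at h0
  exact lt_irrefl _ h0

lemma holder_continuousOn (X : ℝ → ℝ) (K β : ℝ) (hβ : 0 < β) (E : Set ℝ)
    (hX : ∀ t₁ ∈ E, ∀ t₂ ∈ E, |X t₂ - X t₁| ≤ K * |t₂ - t₁| ^ β) :
    ContinuousOn X E := by
  rw [Metric.continuousOn_iff]
  intro x hx ε hε
  set K' := max K 1 with hK'
  have hK'pos : 0 < K' := lt_of_lt_of_le one_pos (le_max_right _ _)
  have hεK : 0 < ε / K' := div_pos hε hK'pos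
  refine ⟨(ε/K')^(1/β), Real.rpow_pos_of_pos hεK _, fun y hy hdist => ?_⟩
  have h1 : |X y - X x| ≤ K * |y - x| ^ β := hX x hx y hy
  have h2 : |y - x| ^ β < ((ε/K')^(1/β)) ^ β := by
    apply Real.rpow_lt_rpow (abs_nonneg _) _ hβ
    rwa [Real.dist_eq] at hdist
  have h3 : ((ε/K')^(1/β)) ^ β = ε / K' := by
    rw [← Real.rpow_mul hεK.le, one_div_mul_cancel hβ.ne', Real.rpow_one]
  rw [Real.dist_eq]
  calc |X y - X x| ≤ K * |y - x| ^ β := h1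
    _ ≤ K' * |y - x| ^ β :=
        mul_le_mul_of_nonneg_right (le_max_left _ _) (Real.rpow_nonneg (abs_nonneg _) _)
    _ < K' * (ε / K') := by
        apply mul_lt_mul_of_pos_left _ hK'pos
        rw [← h3]; exact h2
    _ = ε := by field_simp

lemma lipschitz_comp_continuousOn (b : ℝ → ℝ → ℝ) (B : ℝ) (X : ℝ → ℝ) (E : Set ℝ)
    (hB : ∀ t₁ x₁ t₂ x₂ : ℝ, |b t₂ x₂ - b t₁ x₁| ≤ B * (|t₂ - t₁| + |x₂ - x₁|))
    (hX : ContinuousOn X E) : ContinuousOn (fun τ => b τ (X τ)) E := by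
  have hcont : Continuous (fun p : ℝ × ℝ => b p.1 p.2) := by
    apply LipschitzWith.continuous (K := (2 * |B|).toNNReal)
    apply LipschitzWith.of_dist_le_mul
    intro p q
    have := hB q.1 q.2 p.1 p.2
    rw [Real.coe_toNNReal _ (by positivity)]
    calc dist (b p.1 p.2) (b q.1 q.2) = |b p.1 p.2 - b q.1 q.2| := Real.dist_eq _ _
      _ ≤ B * (|p.1 - q.1| + |p.2 - q.2|) := this
      _ ≤ |B| * (|p.1 - q.1| + |p.2 - q.2|) :=
          mul_le_mul_of_nonneg_right (le_abs_self B) (by positivity)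
      _ ≤ |B| * (dist p q + dist p q) := by
          have h1 : |p.1 - q.1| ≤ dist p q := by
            rw [← Real.dist_eq, Prod.dist_eq]; exact le_max_left _ _
          have h2 : |p.2 - q.2| ≤ dist p q := by
            rw [← Real.dist_eq, Prod.dist_eq]; exact le_max_right _ _
          apply mul_le_mul_of_nonneg_left _ (abs_nonneg B)
          linarith
      _ = 2 * |B| * dist p q := by ring
  exact hcont.comp_continuousOn (continuousOn_id.prodMk hX)

lemma rpow_split (d ε e β : ℝ) (hd0 : 0 ≤ d) (hdε : d ≤ ε) (he : 0 < e) (hβ : 0 < β) :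
    d^(e+β) ≤ ε^e * d^β := by
  rcases eq_or_lt_of_le hd0 with h|h
  · rw [← h, Real.zero_rpow (by positivity : (0:ℝ) < e + β).ne',
      Real.zero_rpow hβ.ne', mul_zero]
  · rw [Real.rpow_add h]
    apply mul_le_mul_of_nonneg_right _ (Real.rpow_nonneg h.le _)
    exact Real.rpow_le_rpow h.le hdε he.le


set_option maxHeartbeats 2000000 in
/-- The integral operator `F X (t) = a + ∫ₛᵗ b(τ,X(τ)) dτ + ∫ₛᵗ σ(τ,X(τ)) dg(τ)`
maps the ball `C_K^β([s,s+ε₁],a)` of `β`-Hölder functions with constant `K`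
and value `a` at `s` into itself, for some `ε₁ > 0`. -/
theorem integral_operator_maps_holder_ball_into_itself
    (b σ : ℝ → ℝ → ℝ) (g : ℝ → ℝ) (γ T K L s a : ℝ)
    (hγ : 1 / 2 < γ) (hγ1 : γ ≤ 1) (hT : 0 < T) (hK : 0 < K) (hL : 0 < L)
    (hb : ∃ B : ℝ, ∀ t₁ x₁ t₂ x₂ : ℝ,
      |b t₂ x₂ - b t₁ x₁| ≤ B * (|t₂ - t₁| + |x₂ - x₁|))
    (hσ : ∃ S : ℝ, ∀ t₁ x₁ t₂ x₂ : ℝ,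
      |σ t₂ x₂ - σ t₁ x₁| ≤ S * (|t₂ - t₁| + |x₂ - x₁|))
    (hg : ∀ t₁ ∈ Icc (0 : ℝ) T, ∀ t₂ ∈ Icc (0 : ℝ) T, |g t₂ - g t₁| ≤ L * |t₂ - t₁| ^ γ)
    (hs : s ∈ Ico (0 : ℝ) T) :
    ∀ β : ℝ, 1 - γ < β → β < γ →
      ∃ ε₁ > (0 : ℝ), s + ε₁ ≤ T ∧
        ∀ X : ℝ → ℝ,
          X s = a →
          (∀ t₁ ∈ Icc s (s + ε₁), ∀ t₂ ∈ Icc s (s + ε₁),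
            |X t₂ - X t₁| ≤ K * |t₂ - t₁| ^ β) →
          ∀ FX : ℝ → ℝ,
            (∀ t ∈ Icc s (s + ε₁), ∃ I : ℝ,
              IsRSIntegral (fun τ => σ τ (X τ)) g s t I ∧
              FX t = a + (∫ τ in s..t, b τ (X τ)) + I) →
            FX s = a ∧
            ∀ t₁ ∈ Icc s (s + ε₁), ∀ t₂ ∈ Icc s (s + ε₁),
              |FX t₂ - FX t₁| ≤ K * |t₂ - t₁| ^ β := by
  intro β hβ1 hβ2
  obtain ⟨B, hB⟩ := hb
  obtain ⟨S, hS⟩ := hσ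
  obtain ⟨hs0, hsT'⟩ := hs
  have hγ0 : 0 < γ := by linarith
  have hβ0 : 0 < β := by linarith
  have hβlt1 : β < 1 := lt_of_lt_of_le hβ2 hγ1
  have hp : 1 < β + γ := by linarith
  set C₀ := (1 - (2:ℝ)^(1-(β+γ)))⁻¹ with hC₀def
  have hr1 : (2:ℝ)^(1-(β+γ)) < 1 :=
    Real.rpow_lt_one_of_one_lt_of_neg (by norm_num) (by linarith)
  have hr0 : (0:ℝ) ≤ (2:ℝ)^(1-(β+γ)) := Real.rpow_nonneg (by norm_num) _
  have hC₀pos : 0 < C₀ := inv_pos.mpr (by linarith)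
  set M₁ := |b s a| + |B| *(1+K) with hM₁def
  set M₂ := |σ s a| + |S| *(1+K) with hM₂def
  set M₃ := |S| *(1+K) with hM₃def
  have hM₁ : 0 ≤ M₁ := by positivity
  have hM₂ : 0 ≤ M₂ := by positivity
  have hM₃ : 0 ≤ M₃ := by positivity
  set M := M₁ + M₂*L + M₃*L*C₀ with hMdef
  have hM0 : 0 ≤ M := by positivity
  set q := min (min (1-β) (γ-β)) γ with hqdef
  have hq0 : 0 < q := lt_min (lt_min (by linarith) (by linarith)) hγ0
  have hKM : 0 < K/(M+1) := by positivity
  set ε₁ := min (min 1 (T-s)) ((K/(M+1))^((1:ℝ)/q)) with hε₁def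
  have hε₁pos : 0 < ε₁ :=
    lt_min (lt_min one_pos (by linarith)) (Real.rpow_pos_of_pos hKM _)
  have hε₁1 : ε₁ ≤ 1 := le_trans (min_le_left _ _) (min_le_left _ _)
  have hsTle : s + ε₁ ≤ T := by
    have h : ε₁ ≤ T - s := le_trans (min_le_left _ _) (min_le_right 1 (T-s))
    linarith [h]
  have hε₁q : M * ε₁^q ≤ K := by
    have h1 : ε₁^q ≤ K/(M+1) := by
      calc ε₁^q ≤ ((K/(M+1))^((1:ℝ)/q))^q :=
            Real.rpow_le_rpow hε₁pos.le (min_le_right _ _) hq0.le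
        _ = K/(M+1) := by
            rw [← Real.rpow_mul hKM.le, one_div_mul_cancel hq0.ne', Real.rpow_one]
    calc M * ε₁^q ≤ M * (K/(M+1)) := mul_le_mul_of_nonneg_left h1 hM0
      _ ≤ K := by
          rw [mul_comm, div_mul_eq_mul_div, div_le_iff₀ (by linarith)]
          nlinarith
  refine ⟨ε₁, hε₁pos, hsTle, ?_⟩
  intro X hXs hX FX hFX
  have hEsub : Icc s (s+ε₁) ⊆ Icc 0 T := Icc_subset_Icc hs0 hsTle
  have hsE : s ∈ Icc s (s+ε₁) := ⟨le_rfl, by linarith⟩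
  obtain ⟨I0, hI0R, hFXs0⟩ := hFX s hsE
  have hFXsa : FX s = a := by
    rw [hFXs0, RS_self _ _ _ _ hI0R, intervalIntegral.integral_same]; ring
  refine ⟨hFXsa, ?_⟩
  have hdiff_le : ∀ x ∈ Icc s (s+ε₁), ∀ y ∈ Icc s (s+ε₁), |y - x| ≤ ε₁ := by
    intro x hx y hy
    rw [abs_le]
    exact ⟨by linarith [hx.2, hy.1], by linarith [hx.1, hy.2]⟩
  have hXbd : ∀ τ ∈ Icc s (s+ε₁), |X τ - a| ≤ K * ε₁^β := by
    intro τ hτ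
    rw [← hXs]
    calc |X τ - X s| ≤ K * |τ - s|^β := hX s hsE τ hτ
      _ ≤ K * ε₁^β := by
          apply mul_le_mul_of_nonneg_left _ hK.le
          exact Real.rpow_le_rpow (abs_nonneg _) (hdiff_le s hsE τ hτ) hβ0.le
  have hεβ1 : ε₁^β ≤ 1 := Real.rpow_le_one hε₁pos.le hε₁1 hβ0.le
  have hbbd : ∀ τ ∈ Icc s (s+ε₁), |b τ (X τ)| ≤ M₁ := by
    intro τ hτ
    have h1 : |b τ (X τ) - b s a| ≤ B * (|τ - s| + |X τ - a|) := hB s a τ (X τ)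
    have h2 : |τ - s| ≤ ε₁ := hdiff_le s hsE τ hτ
    have h3 := hXbd τ hτ
    have habs : |b τ (X τ)| ≤ |b s a| + |b τ (X τ) - b s a| := by
      have := abs_add_le (b s a) (b τ (X τ) - b s a)
      simpa using this
    have hnn : (0:ℝ) ≤ |τ-s| + |X τ - a| := by positivity
    have hBB : B * (|τ - s| + |X τ - a|) ≤ |B| * (1 + K) := by
      calc B * (|τ-s| + |X τ - a|) ≤ |B| * (|τ-s| + |X τ - a|) :=
            mul_le_mul_of_nonneg_right (le_abs_self B) hnn
        _ ≤ |B| * (1 + K) := by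
            apply mul_le_mul_of_nonneg_left _ (abs_nonneg B)
            nlinarith
    rw [hM₁def]; linarith
  have hσbd : ∀ τ ∈ Icc s (s+ε₁), |σ τ (X τ)| ≤ M₂ := by
    intro τ hτ
    have h1 : |σ τ (X τ) - σ s a| ≤ S * (|τ - s| + |X τ - a|) := hS s a τ (X τ)
    have h2 : |τ - s| ≤ ε₁ := hdiff_le s hsE τ hτ
    have h3 := hXbd τ hτ
    have habs : |σ τ (X τ)| ≤ |σ s a| + |σ τ (X τ) - σ s a| := by
      have := abs_add_le (σ s a) (σ τ (X τ) - σ s a)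
      simpa using this
    have hnn : (0:ℝ) ≤ |τ-s| + |X τ - a| := by positivity
    have hBB : S * (|τ - s| + |X τ - a|) ≤ |S| * (1 + K) := by
      calc S * (|τ-s| + |X τ - a|) ≤ |S| * (|τ-s| + |X τ - a|) :=
            mul_le_mul_of_nonneg_right (le_abs_self S) hnn
        _ ≤ |S| * (1 + K) := by
            apply mul_le_mul_of_nonneg_left _ (abs_nonneg S)
            nlinarith
    rw [hM₂def]; linarith
  have hfH : HolderOn (fun τ => σ τ (X τ)) M₃ β (Icc s (s+ε₁)) := by
    intro x hx y hy
    have h1 : |σ y (X y) - σ x (X x)| ≤ S * (|y - x| + |X y - X x|) := hS x (X x) y (X y)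
    have h2 : |X y - X x| ≤ K * |y - x|^β := hX x hx y hy
    have h3 : |y - x| ≤ 1 * |y - x|^β := by
      rcases eq_or_lt_of_le (abs_nonneg (y - x)) with h|h
      · rw [← h, Real.zero_rpow hβ0.ne', mul_zero]
      · have hle1 : |y-x|^(1-β) ≤ 1 := by
          calc |y-x|^(1-β) ≤ (1:ℝ)^(1-β) :=
                Real.rpow_le_rpow (abs_nonneg _) (le_trans (hdiff_le x hx y hy) hε₁1) (by linarith)
            _ = 1 := Real.one_rpow _
        calc |y - x| = |y-x|^(1-β) * |y-x|^β := by
              rw [← Real.rpow_add h, show (1-β) + β = (1:ℝ) from by ring, Real.rpow_one]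
          _ ≤ 1 * |y-x|^β :=
              mul_le_mul_of_nonneg_right hle1 (Real.rpow_nonneg (abs_nonneg _) β)
    have hnn : (0:ℝ) ≤ |y-x| + |X y - X x| := by positivity
    calc |σ y (X y) - σ x (X x)| ≤ |S| * (|y-x| + |X y - X x|) :=
          le_trans h1 (mul_le_mul_of_nonneg_right (le_abs_self S) hnn)
      _ ≤ |S| * ((1 + K) * |y-x|^β) := by
          apply mul_le_mul_of_nonneg_left _ (abs_nonneg S)
          have h4 : (0:ℝ) ≤ |y-x|^β := Real.rpow_nonneg (abs_nonneg _) β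
          nlinarith
      _ = M₃ * |y-x|^β := by rw [hM₃def]; ring
  have hXc : ContinuousOn X (Icc s (s+ε₁)) := holder_continuousOn X K β hβ0 _ hX
  have hbc : ContinuousOn (fun τ => b τ (X τ)) (Icc s (s+ε₁)) :=
    lipschitz_comp_continuousOn b B X _ hB hXc
  suffices aux : ∀ t₁ ∈ Icc s (s+ε₁), ∀ t₂ ∈ Icc s (s+ε₁), t₁ ≤ t₂ →
      |FX t₂ - FX t₁| ≤ K * |t₂ - t₁|^β by
    intro t₁ h₁ t₂ h₂
    rcases le_total t₁ t₂ with h|h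
    · exact aux t₁ h₁ t₂ h₂ h
    · rw [abs_sub_comm (FX t₂), abs_sub_comm t₂]
      exact aux t₂ h₂ t₁ h₁ h
  intro t₁ h₁ t₂ h₂ h12
  obtain ⟨I₁, hI₁, e₁⟩ := hFX t₁ h₁
  obtain ⟨I₂, hI₂, e₂⟩ := hFX t₂ h₂
  have hst₁ : s ≤ t₁ := h₁.1
  have hst₂ : s ≤ t₂ := hst₁.trans h12
  have hd0 : (0:ℝ) ≤ t₂ - t₁ := by linarith
  have hdε : t₂ - t₁ ≤ ε₁ := by
    have := hdiff_le t₁ h₁ t₂ h₂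
    rw [abs_of_nonneg hd0] at this
    exact this
  have II₁ : IntervalIntegrable (fun τ => b τ (X τ)) MeasureTheory.volume s t₁ :=
    (hbc.mono (by rw [uIcc_of_le hst₁]; exact Icc_subset_Icc le_rfl h₁.2)).intervalIntegrable
  have II₂ : IntervalIntegrable (fun τ => b τ (X τ)) MeasureTheory.volume s t₂ :=
    (hbc.mono (by rw [uIcc_of_le hst₂]; exact Icc_subset_Icc le_rfl h₂.2)).intervalIntegrable
  have eqInt : (∫ τ in s..t₂, b τ (X τ)) - (∫ τ in s..t₁, b τ (X τ))
      = ∫ τ in t₁..t₂, b τ (X τ) :=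
    intervalIntegral.integral_interval_sub_left II₂ II₁
  have hIb : |∫ τ in t₁..t₂, b τ (X τ)| ≤ M₁ * (t₂ - t₁) := by
    have hnorm := intervalIntegral.norm_integral_le_of_norm_le_const
      (C := M₁) (f := fun τ => b τ (X τ)) (a := t₁) (b := t₂) ?_
    · rwa [Real.norm_eq_abs, abs_of_nonneg hd0] at hnorm
    · intro x hx
      rw [uIoc_of_le h12] at hx
      exact (Real.norm_eq_abs _) ▸ hbbd x ⟨hst₁.trans hx.1.le, hx.2.trans h₂.2⟩
  have hsubE : Icc s t₂ ⊆ Icc s (s+ε₁) := Icc_subset_Icc le_rfl h₂.2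
  have hgH : HolderOn g L γ (Icc s t₂) :=
    fun x hx y hy => hg x (hEsub (hsubE hx)) y (hEsub (hsubE hy))
  have hfH' : HolderOn (fun τ => σ τ (X τ)) M₃ β (Icc s t₂) :=
    fun x hx y hy => hfH x (hsubE hx) y (hsubE hy)
  have hY := RS_increment (fun τ => σ τ (X τ)) g M₃ L β γ s t₁ t₂ I₁ I₂ hI₁ hI₂
    hst₁ h12 hM₃ hL.le hβ0 hγ0 hp hfH' hgH
  have hgb : |g t₂ - g t₁| ≤ L * (t₂-t₁)^γ := by
    have := hg t₁ (hEsub h₁) t₂ (hEsub h₂)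
    rwa [abs_of_nonneg hd0] at this
  have hfb : |σ t₁ (X t₁)| ≤ M₂ := hσbd t₁ h₁
  have hFXdiff : FX t₂ - FX t₁ = (∫ τ in t₁..t₂, b τ (X τ)) + (I₂ - I₁) := by
    rw [e₁, e₂, ← eqInt]; ring
  set d := t₂ - t₁ with hddef
  have c1 : d ≤ ε₁^(1-β) * d^β := by
    have := rpow_split d ε₁ (1-β) β hd0 hdε (by linarith) hβ0
    rwa [show (1-β) + β = (1:ℝ) from by ring, Real.rpow_one] at this
  have c2 : d^γ ≤ ε₁^(γ-β) * d^β := by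
    have := rpow_split d ε₁ (γ-β) β hd0 hdε (by linarith) hβ0
    rwa [show (γ-β) + β = γ from by ring] at this
  have c3 : d^(β+γ) ≤ ε₁^γ * d^β := by
    have := rpow_split d ε₁ γ β hd0 hdε hγ0 hβ0
    rwa [show γ + β = β+γ from by ring] at this
  have hdβ : (0:ℝ) ≤ d^β := Real.rpow_nonneg hd0 β
  have hq1 : ε₁^(1-β) ≤ ε₁^q :=
    Real.rpow_le_rpow_of_exponent_ge hε₁pos hε₁1 (le_trans (min_le_left _ _) (min_le_left _ _))
  have hq2 : ε₁^(γ-β) ≤ ε₁^q :=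
    Real.rpow_le_rpow_of_exponent_ge hε₁pos hε₁1 (le_trans (min_le_left _ _) (min_le_right _ _))
  have hq3 : ε₁^γ ≤ ε₁^q :=
    Real.rpow_le_rpow_of_exponent_ge hε₁pos hε₁1 (min_le_right _ _)
  have key : |FX t₂ - FX t₁|
      ≤ M₁ * d + M₃ * L * d^(β+γ) * C₀ + M₂ * (L * d^γ) := by
    rw [hFXdiff]
    have step1 : (∫ τ in t₁..t₂, b τ (X τ)) + (I₂ - I₁)
        = (∫ τ in t₁..t₂, b τ (X τ))
          + (I₂ - I₁ - (σ t₁ (X t₁)) * (g t₂ - g t₁))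
          + (σ t₁ (X t₁)) * (g t₂ - g t₁) := by ring
    rw [step1]
    have T1 := hIb
    have T2 := hY
    have T3 : |(σ t₁ (X t₁)) * (g t₂ - g t₁)| ≤ M₂ * (L * d^γ) := by
      rw [abs_mul]
      exact mul_le_mul hfb hgb (abs_nonneg _) hM₂
    calc |(∫ τ in t₁..t₂, b τ (X τ))
          + (I₂ - I₁ - (σ t₁ (X t₁)) * (g t₂ - g t₁))
          + (σ t₁ (X t₁)) * (g t₂ - g t₁)|
        ≤ |(∫ τ in t₁..t₂, b τ (X τ))
          + (I₂ - I₁ - (σ t₁ (X t₁)) * (g t₂ - g t₁))|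
          + |(σ t₁ (X t₁)) * (g t₂ - g t₁)| := abs_add_le _ _
      _ ≤ |(∫ τ in t₁..t₂, b τ (X τ))|
          + |I₂ - I₁ - (σ t₁ (X t₁)) * (g t₂ - g t₁)|
          + |(σ t₁ (X t₁)) * (g t₂ - g t₁)| := by
            have := abs_add_le (∫ τ in t₁..t₂, b τ (X τ))
              (I₂ - I₁ - (σ t₁ (X t₁)) * (g t₂ - g t₁))
            linarith
      _ ≤ M₁ * d + M₃ * L * d^(β+γ) * C₀ + M₂ * (L * d^γ) := by
            apply add_le_add (add_le_add T1 T2) T3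
  have final : M₁ * d + M₃ * L * d^(β+γ) * C₀ + M₂ * (L * d^γ) ≤ K * d^β := by
    have b1 : M₁ * d ≤ M₁ * ε₁^q * d^β := by
      calc M₁ * d ≤ M₁ * (ε₁^(1-β) * d^β) := mul_le_mul_of_nonneg_left c1 hM₁
        _ ≤ M₁ * (ε₁^q * d^β) := by
            apply mul_le_mul_of_nonneg_left _ hM₁
            exact mul_le_mul_of_nonneg_right hq1 hdβ
        _ = M₁ * ε₁^q * d^β := by ring
    have b2 : M₃ * L * d^(β+γ) * C₀ ≤ M₃ * L * C₀ * ε₁^q * d^β := by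
      calc M₃ * L * d^(β+γ) * C₀ ≤ M₃ * L * (ε₁^γ * d^β) * C₀ := by
            apply mul_le_mul_of_nonneg_right _ hC₀pos.le
            exact mul_le_mul_of_nonneg_left c3 (by positivity)
        _ ≤ M₃ * L * (ε₁^q * d^β) * C₀ := by
            apply mul_le_mul_of_nonneg_right _ hC₀pos.le
            apply mul_le_mul_of_nonneg_left _ (by positivity)
            exact mul_le_mul_of_nonneg_right hq3 hdβ
        _ = M₃ * L * C₀ * ε₁^q * d^β := by ring
    have b3 : M₂ * (L * d^γ) ≤ M₂ * L * ε₁^q * d^β := by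
      calc M₂ * (L * d^γ) ≤ M₂ * (L * (ε₁^(γ-β) * d^β)) := by
            apply mul_le_mul_of_nonneg_left _ hM₂
            exact mul_le_mul_of_nonneg_left c2 hL.le
        _ ≤ M₂ * (L * (ε₁^q * d^β)) := by
            apply mul_le_mul_of_nonneg_left _ hM₂
            apply mul_le_mul_of_nonneg_left _ hL.le
            exact mul_le_mul_of_nonneg_right hq2 hdβ
        _ = M₂ * L * ε₁^q * d^β := by ring
    have hsum : M₁ * ε₁^q * d^β + M₃ * L * C₀ * ε₁^q * d^β + M₂ * L * ε₁^q * d^β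
        = (M * ε₁^q) * d^β := by rw [hMdef]; ring
    have hfin : (M * ε₁^q) * d^β ≤ K * d^β :=
      mul_le_mul_of_nonneg_right hε₁q hdβ
    linarith
  rw [show |t₂ - t₁| = d from by rw [hddef, abs_of_nonneg hd0]]
  linarith
end
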